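/- Let ξ, η ∈ 𝒞 and let z, w ∈ ℂ with |z| < r and |w| < r. Then (1/(4π²)) ∬_{|a|=r, |b|=r} ⟨C_Φ(a,b) · ξ/(a − conj(w)), η/(b − conj(z))⟩_𝒞 da dconj(b) = ⟨((Φ(conj(z))* + Φ(conj(w)))/(1 − z·conj(w))) ξ, η⟩_𝒞. -/

import Mathlib

open ComplexConjugate

noncomputable section

variable {C : Type*} [NormedAddCommGroup C] [InnerProductSpace ℂ C] [CompleteSpace C]

/-- The inner product of the paper, linear in the first entry:
`⟨x, y⟩_𝒞 := ⟪y, x⟫` (Mathlib's inner product is conjugate-linear in the first entry). -/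
def ip (x y : C) : ℂ := inner ℂ y x

/-- The kernel `C_Φ(a,b) = (Φ(a) + Φ(b)*)/(1 - a·conj b)`. -/
def CPhi (Φ : ℂ → C →L[ℂ] C) (a b : ℂ) : C →L[ℂ] C :=
  (1 - a * conj b)⁻¹ • (Φ a + ContinuousLinearMap.adjoint (Φ b))

/-- Point `r e^{is}` on the circle of radius `r`. -/
def circ (r s : ℝ) : ℂ := (r : ℂ) * Complex.exp (Complex.I * s)

/-- The function `f(z) = Σ_{u≥1} f_u z^{-u}` associated with a coefficient sequence
(`f u` is the coefficient `f_{u+1}`). -/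
def Hfun (f : ℕ → C) : ℂ → C := fun z => ∑' u : ℕ, (z ^ (u + 1))⁻¹ • f u

/-- The sesquilinear form
`[F,G]_Φ = (1/4π²) ∬_{|a|=r,|b|=r} ⟨C_Φ(a,b) F(a), G(b)⟩ da dconj(b)`, written with the
parametrization `a = r e^{is}`, `b = r e^{it}`, `da = i r e^{is} ds`,
`dconj(b) = -i r e^{-it} dt`. -/
def formPhi (Φ : ℂ → C →L[ℂ] C) (r : ℝ) (F G : ℂ → C) : ℂ :=
  (1 / (4 * (Real.pi : ℂ) ^ 2)) *
    ∫ s in (0:ℝ)..(2 * Real.pi), ∫ t in (0:ℝ)..(2 * Real.pi),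
      ip (CPhi Φ (circ r s) (circ r t) (F (circ r s))) (G (circ r t)) *
        (Complex.I * (r : ℂ) * Complex.exp (Complex.I * s)) *
        (-Complex.I * (r : ℂ) * Complex.exp (-Complex.I * t))

/-
Writing `u = conj b`, the integrand becomes `(a - conj w)⁻¹ (u - z)⁻¹ K(a, u) da du` with
`K(a, u) = (1 - a u)⁻¹ (⟪η, Φ(a) ξ⟫ + ⟪Φ(conj u) η, ξ⟫)`, which is holomorphic in `(a, u)` on the
closed bidisc of radius `r < 1`. As `b` runs counterclockwise over `|b| = r`, `u` runs clockwise,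
so the two iterated integrals are Cauchy integrals (the inner one with a sign), and they
evaluate `K` at `(conj w, z)`, which is the right-hand side.
-/

open ComplexConjugate Complex Metric

lemma circ_eq_circleMap (r t : ℝ) : circ r t = circleMap 0 r t := by
  simp [circ, circleMap, mul_comm]

lemma conj_circ (r t : ℝ) : conj (circ r t) = r * exp (-I * t) := by
  rw [circ, map_mul, conj_ofReal, ← exp_conj, map_mul, conj_I, conj_ofReal, neg_mul]

lemma conj_circ_eq_circ_neg (r t : ℝ) : conj (circ r t) = circ r (-t) := by
  rw [conj_circ, circ, ofReal_neg, mul_neg, neg_mul]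

lemma circ_periodic (r : ℝ) : Function.Periodic (circ r) (2 * Real.pi) := by
  intro t
  simp only [circ, ofReal_add, ofReal_mul, ofReal_ofNat, mul_add, exp_add]
  rw [show I * (2 * Real.pi) = 2 * Real.pi * I by ring, exp_two_pi_mul_I, mul_one]

lemma integral_comp_conj_circ (F : ℂ → ℂ) (r : ℝ) :
    ∫ t in (0 : ℝ)..2 * Real.pi, F (conj (circ r t))
      = ∫ t in (0 : ℝ)..2 * Real.pi, F (circ r t) := by
  simp only [conj_circ_eq_circ_neg]
  rw [intervalIntegral.integral_comp_neg (fun t => F (circ r t)), neg_zero]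
  simpa using ((circ_periodic r).comp F).intervalIntegral_add_eq (-(2 * Real.pi)) 0

lemma integral_circ_cauchy {f : ℂ → ℂ} {r : ℝ} {c : ℂ}
    (hf : DifferentiableOn ℂ f (closedBall 0 r)) (hc : ‖c‖ < r) :
    ∫ t in (0 : ℝ)..2 * Real.pi, (circ r t - c)⁻¹ * f (circ r t) * (I * circ r t)
      = 2 * Real.pi * I * f c := by
  have h := hf.circleIntegral_sub_inv_smul (w := c) (by simpa using hc)
  simp only [circleIntegral, deriv_circleMap, smul_eq_mul] at h
  rw [← h]
  refine intervalIntegral.integral_congr fun t _ => ?_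
  simp only [circ_eq_circleMap]
  ring

lemma integral_conj_circ_cauchy {f : ℂ → ℂ} {r : ℝ} {c : ℂ}
    (hf : DifferentiableOn ℂ f (closedBall 0 r)) (hc : ‖c‖ < r) :
    ∫ t in (0 : ℝ)..2 * Real.pi,
        (conj (circ r t) - c)⁻¹ * f (conj (circ r t)) * (-I * conj (circ r t))
      = -(2 * Real.pi * I * f c) := by
  rw [integral_comp_conj_circ (fun u => (u - c)⁻¹ * f u * (-I * u)), ← integral_circ_cauchy hf hc,
    ← intervalIntegral.integral_neg]
  congr 1 with t
  ring

lemma double_integral_circ_cauchy {K : ℂ → ℂ → ℂ} {r : ℝ} {c d : ℂ}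
    (hK : DifferentiableOn ℂ (Function.uncurry K) (closedBall 0 r ×ˢ closedBall 0 r))
    (hc : ‖c‖ < r) (hd : ‖d‖ < r) :
    ∫ s in (0 : ℝ)..2 * Real.pi, ∫ t in (0 : ℝ)..2 * Real.pi,
        (circ r s - c)⁻¹ * (conj (circ r t) - d)⁻¹ * K (circ r s) (conj (circ r t))
          * (I * circ r s) * (-I * conj (circ r t))
      = 4 * Real.pi ^ 2 * K c d := by
  have hK₁ : ∀ a ∈ closedBall (0 : ℂ) r, DifferentiableOn ℂ (K a) (closedBall 0 r) := fun a ha =>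
    hK.comp ((differentiableOn_const a).prodMk differentiableOn_id) fun u hu => ⟨ha, hu⟩
  have hK₂ : DifferentiableOn ℂ (K · d) (closedBall 0 r) :=
    hK.comp (differentiableOn_id.prodMk (differentiableOn_const d))
      fun a ha => ⟨ha, by simpa using hd.le⟩
  have hinner (s : ℝ) : ∫ t in (0 : ℝ)..2 * Real.pi,
        (circ r s - c)⁻¹ * (conj (circ r t) - d)⁻¹ * K (circ r s) (conj (circ r t))
          * (I * circ r s) * (-I * conj (circ r t))
      = -(2 * Real.pi * I) * ((circ r s - c)⁻¹ * K (circ r s) d * (I * circ r s)) := by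
    have hs : circ r s ∈ closedBall (0 : ℂ) r := by
      rw [circ_eq_circleMap]
      exact circleMap_mem_closedBall 0 ((norm_nonneg c).trans hc.le) s
    calc _ = (circ r s - c)⁻¹ * (I * circ r s) * ∫ t in (0 : ℝ)..2 * Real.pi,
          (conj (circ r t) - d)⁻¹ * K (circ r s) (conj (circ r t)) * (-I * conj (circ r t)) := by
          rw [← intervalIntegral.integral_const_mul]
          congr 1 with t
          ring
      _ = _ := by
          rw [integral_conj_circ_cauchy (hK₁ _ hs) hd]
          ring
  calc _ = -(2 * Real.pi * I) * ∫ s in (0 : ℝ)..2 * Real.pi,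
        (circ r s - c)⁻¹ * K (circ r s) d * (I * circ r s) := by
        simp only [hinner, intervalIntegral.integral_const_mul]
    _ = 4 * Real.pi ^ 2 * K c d := by
        rw [integral_circ_cauchy hK₂ hc]
        linear_combination (-(4 * Real.pi ^ 2 * K c d)) * I_mul_I

section InnerProduct

variable {E : Type*} [NormedAddCommGroup E] [InnerProductSpace ℂ E]

lemma ip_smul_left (c : ℂ) (x y : E) : ip (c • x) y = c * ip x y :=
  inner_smul_right y x c

lemma ip_smul_right (c : ℂ) (x y : E) : ip x (c • y) = conj c * ip x y :=
  inner_smul_left y x c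

lemma differentiableAt_inner_apply_conj {Φ : ℂ → E →L[ℂ] E} {u : ℂ}
    (hΦ : DifferentiableAt ℂ Φ (conj u)) (ξ η : E) :
    DifferentiableAt ℂ (fun u => inner ℂ (Φ (conj u) η) ξ) u := by
  have h := ((innerSL ℂ ξ).differentiableAt.comp _
    (hΦ.clm_apply (differentiableAt_const η))).conj_conj
  simpa [Function.comp_def, inner_conj_symm] using h

end InnerProduct

lemma ip_CPhi_apply (Φ : ℂ → C →L[ℂ] C) (a b : ℂ) (ξ η : C) :
    ip (CPhi Φ a b ξ) η = (1 - a * conj b)⁻¹ * (inner ℂ η (Φ a ξ) + inner ℂ (Φ b η) ξ) := by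
  simp only [ip, CPhi, smul_apply, add_apply, inner_smul_right, inner_add_right,
    ContinuousLinearMap.adjoint_inner_right]

lemma differentiableOn_ip_CPhi_conj {Φ : ℂ → C →L[ℂ] C} {r R : ℝ}
    (hΦ : DifferentiableOn ℂ Φ (ball 0 R)) (hrR : r < R) (hr : r < 1) (ξ η : C) :
    DifferentiableOn ℂ (Function.uncurry fun a u => ip (CPhi Φ a (conj u) ξ) η)
      (closedBall 0 r ×ˢ closedBall 0 r) := by
  have hΦ' : ∀ a ∈ closedBall (0 : ℂ) r, DifferentiableAt ℂ Φ a := fun a ha =>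
    hΦ.differentiableAt (isOpen_ball.mem_nhds (closedBall_subset_ball hrR ha))
  rintro ⟨a, u⟩ ⟨ha, hu⟩
  have hau : 1 - a * u ≠ 0 := by
    rw [mem_closedBall_zero_iff] at ha hu
    refine sub_ne_zero.mpr fun h => ?_
    have : ‖a * u‖ < 1 := by
      rw [norm_mul]
      exact (mul_le_of_le_one_right (norm_nonneg a) (hu.trans hr.le)).trans_lt (ha.trans_lt hr)
    simp [← h] at this
  have hg := (innerSL ℂ η).differentiableAt.comp _ ((hΦ' a ha).clm_apply (differentiableAt_const ξ))
  have hh := differentiableAt_inner_apply_conj (hΦ' (conj u) (by simpa using hu)) ξ η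
  simp only [Function.uncurry_def, ip_CPhi_apply, conj_conj]
  have hprod : DifferentiableAt ℂ (fun p : ℂ × ℂ => p.1 * p.2) (a, u) :=
    differentiableAt_fst.mul differentiableAt_snd
  exact (((differentiableAt_const 1).sub hprod).inv hau |>.mul
    ((hg.comp _ differentiableAt_fst).add (hh.comp _ differentiableAt_snd))).differentiableWithinAt

theorem statement13_general {C : Type*} [NormedAddCommGroup C] [InnerProductSpace ℂ C] [CompleteSpace C]
    (r r₀ : ℝ) (hrr0 : r < r₀) (hr01 : r₀ < 1)
    (Φ : ℂ → C →L[ℂ] C)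
    (hΦa : AnalyticOnNhd ℂ Φ (Metric.ball (0 : ℂ) r₀))
    (ξ η : C) (z w : ℂ) (hz : ‖z‖ < r) (hw : ‖w‖ < r) :
    formPhi Φ r (fun a => (a - conj w)⁻¹ • ξ) (fun b => (b - conj z)⁻¹ • η)
      = ip (((1 - z * conj w)⁻¹ : ℂ) •
            ((ContinuousLinearMap.adjoint (Φ (conj z)) + Φ (conj w)) ξ)) η := by
  set K : ℂ → ℂ → ℂ := fun a u => ip (CPhi Φ a (conj u) ξ) η
  have hK := differentiableOn_ip_CPhi_conj hΦa.differentiableOn hrr0 (hrr0.trans hr01) ξ η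
  have hcauchy := double_integral_circ_cauchy (K := K) hK (by rwa [RCLike.norm_conj]) hz
  have hintegrand (s t : ℝ) :
      ip (CPhi Φ (circ r s) (circ r t) ((circ r s - conj w)⁻¹ • ξ)) ((circ r t - conj z)⁻¹ • η)
          * (I * r * exp (I * s)) * (-I * r * exp (-I * t))
        = (circ r s - conj w)⁻¹ * (conj (circ r t) - z)⁻¹ * K (circ r s) (conj (circ r t))
          * (I * circ r s) * (-I * conj (circ r t)) := by
    simp only [K, map_smul, ip_smul_left, ip_smul_right, conj_conj, map_inv₀, map_sub]
    rw [conj_circ, circ]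
    ring
  have hRHS : ip (((1 - z * conj w)⁻¹ : ℂ) •
      ((ContinuousLinearMap.adjoint (Φ (conj z)) + Φ (conj w)) ξ)) η = K (conj w) z := by
    simp only [K, CPhi, conj_conj, mul_comm z, add_comm (ContinuousLinearMap.adjoint _), smul_apply]
  rw [formPhi, hRHS]
  simp only [hintegrand]
  rw [hcauchy]
  field_simp

/-- for `|z| < r`, `|w| < r`,
`(1/4π²) ∬_{|a|=r,|b|=r} ⟨C_Φ(a,b) ξ/(a-conj w), η/(b-conj z)⟩ da dconj(b)
  = ⟨((Φ(conj z)* + Φ(conj w))/(1-z·conj w)) ξ, η⟩`. -/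
theorem statement13 {C : Type*} [NormedAddCommGroup C] [InnerProductSpace ℂ C] [CompleteSpace C]
    (r r₀ : ℝ) (hr0 : 0 < r) (hrr0 : r < r₀) (hr01 : r₀ < 1)
    (Φ : ℂ → C →L[ℂ] C)
    (hΦa : AnalyticOnNhd ℂ Φ (Metric.ball (0 : ℂ) r₀))
    (hΦc : ContinuousOn Φ (Metric.closedBall (0 : ℂ) r₀))
    (ξ η : C) (z w : ℂ) (hz : ‖z‖ < r) (hw : ‖w‖ < r) :
    formPhi Φ r (fun a => (a - conj w)⁻¹ • ξ) (fun b => (b - conj z)⁻¹ • η)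
      = ip (((1 - z * conj w)⁻¹ : ℂ) •
            ((ContinuousLinearMap.adjoint (Φ (conj z)) + Φ (conj w)) ξ)) η :=
  statement13_general r r₀ hrr0 hr01 Φ hΦa ξ η z w hz hw

end
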